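/- P is a pseudo-triangular basis of fuzzy sets if and only if the map T_P : [0,1] → [0,1]^n, t ↦ (f_1(t),…,f_n(t)), is injective and its range is a Hamiltonian path on the 1-skeleton of Δ_n, i.e., equals ⋃_{i=1}^{n−1} conv{e_{π(i)}, e_{π(i+1)}} for some permutation π of {1,…,n}. -/

import Mathlib

/-!
Put `Φ_π(p) = ∑ₖ k · p (π k)`. Along the Hamiltonian path through `e_{π 0}, …, e_{π (n-1)}` it
is an arc-length coordinate: affine on each edge, equal to `k` at the `k`-th vertex, and a point
of the path is determined by it.

Given a pseudo-triangular basis, on `[t i, t (i+1)]` the curve `T_P` runs bijectively along the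
edge `[e_{σ i}, e_{σ (i+1)}]`; this gives both the image and injectivity. Conversely, if `T_P` is
injective with image the path, then `Φ_π ∘ T_P` is continuous and injective on `[0,1]`, hence
strictly monotone, and increasing after possibly reversing `π`. The nodes are the preimages of
the vertices, and on `[t i, t (i+1)]` the only nonzero coordinates of `T_P` are `i + 1 - Φ_π` and
`Φ_π - i`; conditions (a)–(d) follow by the intermediate value theorem.
-/

open Set

local notation "𝐞" i:max => EuclideanSpace.single i (1 : ℝ)

section Order

variable {α δ : Type*} [ConditionallyCompleteLinearOrder α] [TopologicalSpace α] [OrderTopology α]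
  [DenselyOrdered α] [LinearOrder δ] [TopologicalSpace δ] [OrderClosedTopology δ]
  {f : α → δ} {a b : α}

theorem StrictMonoOn.bijOn_Icc (hab : a ≤ b) (hf : StrictMonoOn f (Icc a b))
    (hc : ContinuousOn f (Icc a b)) : BijOn f (Icc a b) (Icc (f a) (f b)) :=
  ⟨hf.monotoneOn.mapsTo_Icc, hf.injOn,
    hc.surjOn_Icc (left_mem_Icc.2 hab) (right_mem_Icc.2 hab)⟩

theorem StrictAntiOn.bijOn_Icc (hab : a ≤ b) (hf : StrictAntiOn f (Icc a b))
    (hc : ContinuousOn f (Icc a b)) : BijOn f (Icc a b) (Icc (f b) (f a)) :=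
  ⟨hf.antitoneOn.mapsTo_Icc, hf.injOn,
    hc.surjOn_Icc (right_mem_Icc.2 hab) (left_mem_Icc.2 hab)⟩

end Order

theorem eq_smul_single_add_smul_single_iff {ι : Type*} [Fintype ι] [DecidableEq ι]
    (σ : Equiv.Perm ι) {i j : ι} (hij : i ≠ j) {p : EuclideanSpace ℝ ι} {a b : ℝ} :
    p = a • 𝐞 (σ i) + b • 𝐞 (σ j) ↔
      p (σ i) = a ∧ p (σ j) = b ∧ ∀ k, k ≠ i → k ≠ j → p (σ k) = 0 := by
  have hσ : σ i ≠ σ j := σ.injective.ne hij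
  constructor
  · rintro rfl
    refine ⟨by simp [hσ], by simp [hσ.symm], fun k hki hkj => ?_⟩
    simp [σ.injective.ne hki, σ.injective.ne hkj]
  · rintro ⟨hi, hj, hk⟩
    ext m
    obtain ⟨k, rfl⟩ := σ.surjective m
    by_cases hki : k = i
    · subst hki; simp [hi, hσ.symm]
    by_cases hkj : k = j
    · subst hkj; simp [hj, hσ]
    simp [hk k hki hkj, σ.injective.ne hki, σ.injective.ne hkj]

section PseudoTriangular

variable {n : ℕ}

noncomputable def hamPath (π : Equiv.Perm (Fin n)) : Set (EuclideanSpace ℝ (Fin n)) :=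
  ⋃ i : Fin n, ⋃ hi : (i : ℕ) + 1 < n, segment ℝ (𝐞 (π i)) (𝐞 (π ⟨(i : ℕ) + 1, hi⟩))

noncomputable def pathParam (π : Equiv.Perm (Fin n)) (p : EuclideanSpace ℝ (Fin n)) : ℝ :=
  ∑ k : Fin n, ((k : ℕ) : ℝ) * p (π k)

theorem mem_hamPath_iff {π : Equiv.Perm (Fin n)} {p : EuclideanSpace ℝ (Fin n)} :
    p ∈ hamPath π ↔ ∃ (i : Fin n) (hi : (i : ℕ) + 1 < n), ∃ a ∈ Icc (0 : ℝ) 1,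
      p = a • 𝐞 (π i) + (1 - a) • 𝐞 (π ⟨(i : ℕ) + 1, hi⟩) := by
  simp only [hamPath, mem_iUnion, segment, mem_ofPred_eq]
  refine exists₂_congr fun i hi => ⟨?_, ?_⟩
  · rintro ⟨a, b, ha, hb, hab, rfl⟩
    exact ⟨a, ⟨ha, by linarith⟩, by rw [← hab, add_sub_cancel_left]⟩
  · rintro ⟨a, ⟨ha, ha'⟩, rfl⟩
    exact ⟨a, 1 - a, ha, by linarith, by ring, rfl⟩

theorem pathParam_smul_single_add (π : Equiv.Perm (Fin n)) (i j : Fin n) (a b : ℝ) :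
    pathParam π (a • 𝐞 (π i) + b • 𝐞 (π j)) = a * i + b * j := by
  simp [pathParam, PiLp.single_apply, mul_add, Finset.sum_add_distrib, mul_comm]

theorem pathParam_single (π : Equiv.Perm (Fin n)) (i : Fin n) :
    pathParam π (𝐞 (π i)) = i := by
  simpa using pathParam_smul_single_add π i i 1 0

theorem pathParam_smul_single_add_one_sub_smul (π : Equiv.Perm (Fin n)) {j : Fin n}
    (hj : (j : ℕ) + 1 < n) (a : ℝ) :
    pathParam π (a • 𝐞 (π j) + (1 - a) • 𝐞 (π ⟨(j : ℕ) + 1, hj⟩)) = j + 1 - a := by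
  rw [pathParam_smul_single_add]
  push_cast
  ring

theorem eq_of_mem_hamPath {π : Equiv.Perm (Fin n)} {p : EuclideanSpace ℝ (Fin n)}
    (hp : p ∈ hamPath π) {i : Fin n} (hi : (i : ℕ) + 1 < n)
    (h₁ : (i : ℝ) ≤ pathParam π p) (h₂ : pathParam π p ≤ i + 1) :
    p = (i + 1 - pathParam π p) • 𝐞 (π i) +
      (1 - (i + 1 - pathParam π p)) • 𝐞 (π ⟨(i : ℕ) + 1, hi⟩) := by
  obtain ⟨j, hj, a, ⟨ha₀, ha₁⟩, rfl⟩ := mem_hamPath_iff.1 hp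
  rw [pathParam_smul_single_add_one_sub_smul] at h₁ h₂ ⊢
  rcases lt_trichotomy (j : ℕ) i with hji | hji | hji
  · have hji' : (j : ℝ) + 1 ≤ i := by exact_mod_cast hji
    obtain rfl : a = 0 := by linarith
    obtain rfl : (⟨(j : ℕ) + 1, hj⟩ : Fin n) = i :=
      Fin.ext (by exact_mod_cast (by linarith : (j : ℝ) + 1 = i))
    simp
  · obtain rfl : j = i := Fin.ext hji
    congr 2 <;> ring
  · have hij' : (i : ℝ) + 1 ≤ j := by exact_mod_cast hji
    obtain rfl : a = 1 := by linarith
    obtain rfl : (⟨(i : ℕ) + 1, hi⟩ : Fin n) = j :=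
      Fin.ext (by exact_mod_cast (by linarith : (i : ℝ) + 1 = j))
    simp

theorem exists_pathParam_mem_Icc {π : Equiv.Perm (Fin n)} {p : EuclideanSpace ℝ (Fin n)}
    (hp : p ∈ hamPath π) :
    ∃ (j : Fin n) (_ : (j : ℕ) + 1 < n), pathParam π p ∈ Icc (j : ℝ) (j + 1) := by
  obtain ⟨j, hj, a, ⟨ha₀, ha₁⟩, rfl⟩ := mem_hamPath_iff.1 hp
  rw [pathParam_smul_single_add_one_sub_smul]
  exact ⟨j, hj, by linarith, by linarith⟩

theorem injOn_pathParam (π : Equiv.Perm (Fin n)) : InjOn (pathParam π) (hamPath π) := by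
  intro p hp q hq hpq
  obtain ⟨j, hj, h₁, h₂⟩ := exists_pathParam_mem_Icc hp
  rw [eq_of_mem_hamPath hp hj h₁ h₂, eq_of_mem_hamPath hq hj (hpq ▸ h₁) (hpq ▸ h₂), hpq]

theorem pathParam_mem_Icc {π : Equiv.Perm (Fin n)} {p : EuclideanSpace ℝ (Fin n)}
    (hp : p ∈ hamPath π) : pathParam π p ∈ Icc (0 : ℝ) (n - 1) := by
  obtain ⟨j, hj, h₁, h₂⟩ := exists_pathParam_mem_Icc hp
  have : (j : ℝ) + 1 + 1 ≤ n := by exact_mod_cast hj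
  exact ⟨(Nat.cast_nonneg _).trans h₁, by linarith⟩

theorem sum_eq_one_of_mem_hamPath {π : Equiv.Perm (Fin n)} {p : EuclideanSpace ℝ (Fin n)}
    (hp : p ∈ hamPath π) : ∑ k, p k = 1 := by
  obtain ⟨j, _, a, -, rfl⟩ := mem_hamPath_iff.1 hp
  simp [PiLp.single_apply, Finset.sum_add_distrib]

theorem single_mem_hamPath (hn : 2 ≤ n) (π : Equiv.Perm (Fin n)) (i : Fin n) :
    𝐞 (π i) ∈ hamPath π := by
  refine mem_hamPath_iff.2 ?_
  by_cases hi : (i : ℕ) + 1 < n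
  · exact ⟨i, hi, 1, ⟨zero_le_one, le_rfl⟩, by simp⟩
  · refine ⟨⟨n - 2, by omega⟩, by simp; omega, 0, ⟨le_rfl, zero_le_one⟩, ?_⟩
    have : (⟨n - 2 + 1, by omega⟩ : Fin n) = i := Fin.ext (by simp; omega)
    simp [this]

theorem pathParam_revPerm (π : Equiv.Perm (Fin n)) {p : EuclideanSpace ℝ (Fin n)}
    (hp : ∑ k, p k = 1) : pathParam (Fin.revPerm.trans π) p = n - 1 - pathParam π p := by
  have hrev : ∀ k : Fin n, ((Fin.rev k : ℕ) : ℝ) = n - 1 - k := fun k => by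
    rw [Fin.val_rev, Nat.cast_sub (by omega)]; push_cast; ring
  calc pathParam (Fin.revPerm.trans π) p
      = ∑ k : Fin n, ((Fin.rev k : ℕ) : ℝ) * p (π k) := by
        rw [← Equiv.sum_comp Fin.revPerm]; simp [pathParam]
    _ = (n - 1) * ∑ k, p (π k) - pathParam π p := by
        simp only [hrev, pathParam, Finset.mul_sum, ← Finset.sum_sub_distrib]
        exact Finset.sum_congr rfl fun k _ => by ring
    _ = n - 1 - pathParam π p := by rw [Equiv.sum_comp π (fun k => p k), hp, mul_one]

theorem hamPath_revPerm_subset (π : Equiv.Perm (Fin n)) :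
    hamPath (Fin.revPerm.trans π) ⊆ hamPath π := by
  intro p hp
  simp only [hamPath, mem_iUnion] at hp ⊢
  obtain ⟨i, hi, hp⟩ := hp
  refine ⟨⟨n - 2 - i, by omega⟩, by simp; omega, ?_⟩
  rw [segment_symm]
  convert hp using 3 <;> simp [Fin.ext_iff, Fin.val_rev] <;> omega

theorem hamPath_revPerm (π : Equiv.Perm (Fin n)) :
    hamPath (Fin.revPerm.trans π) = hamPath π := by
  refine (hamPath_revPerm_subset π).antisymm ?_
  have hinv : Fin.revPerm.trans (Fin.revPerm.trans π) = π := by ext; simp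
  simpa only [hinv] using hamPath_revPerm_subset (Fin.revPerm.trans π)

theorem exists_mem_Icc_of_monotone {α : Type*} [LinearOrder α] (hn : 2 ≤ n) {t : Fin n → α}
    (ht : Monotone t) {x : α} (hx : x ∈ Icc (t ⟨0, zero_lt_two.trans_le hn⟩)
      (t ⟨n - 1, Nat.sub_lt (zero_lt_two.trans_le hn) one_pos⟩)) :
    ∃ (i : Fin n) (hi : (i : ℕ) + 1 < n), x ∈ Icc (t i) (t ⟨(i : ℕ) + 1, hi⟩) := by
  suffices H : ∀ k (hk : k < n), x ≤ t ⟨k, hk⟩ →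
      ∃ (i : Fin n) (hi : (i : ℕ) + 1 < n), x ∈ Icc (t i) (t ⟨(i : ℕ) + 1, hi⟩) from
    H (n - 1) (by omega) hx.2
  intro k
  induction k with
  | zero => exact fun _ hxk => ⟨⟨0, by omega⟩, by simp; omega, hx.1, hxk.trans (ht (by simp))⟩
  | succ k ih =>
    intro hk hxk
    by_cases hkx : t ⟨k, by omega⟩ ≤ x
    · exact ⟨⟨k, by omega⟩, hk, hkx, hxk⟩
    · exact ih (by omega) (le_of_not_ge hkx)

-- The map `T_P` of the paper.
noncomputable def curve (f : Fin n → ℝ → ℝ) (x : ℝ) : EuclideanSpace ℝ (Fin n) :=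
  WithLp.toLp 2 (fun i => f i x)

@[simp]
theorem curve_apply (f : Fin n → ℝ → ℝ) (x : ℝ) (i : Fin n) : curve f x i = f i x := rfl

def IsPseudoTriangularStep (f : Fin n → ℝ → ℝ) (σ : Equiv.Perm (Fin n)) (t : Fin n → ℝ)
    (i : Fin n) (hi : (i : ℕ) + 1 < n) : Prop :=
  (f (σ i) (t i) = 1 ∧ f (σ i) (t ⟨(i : ℕ) + 1, hi⟩) = 0) ∧
  (∀ j : Fin n, j ≠ i → j ≠ ⟨(i : ℕ) + 1, hi⟩ →
    ∀ x ∈ Icc (t i) (t ⟨(i : ℕ) + 1, hi⟩), f (σ j) x = 0) ∧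
  (∀ x ∈ Icc (t i) (t ⟨(i : ℕ) + 1, hi⟩), f (σ ⟨(i : ℕ) + 1, hi⟩) x = 1 - f (σ i) x) ∧
  (BijOn (f (σ i)) (Icc (t i) (t ⟨(i : ℕ) + 1, hi⟩)) (Icc 0 1) ∧
    BijOn (f (σ ⟨(i : ℕ) + 1, hi⟩)) (Icc (t i) (t ⟨(i : ℕ) + 1, hi⟩)) (Icc 0 1))

-- Conditions (a)–(d), with the family enumerated along the nodes: `f (σ i)` peaks at `t i`.
def IsPseudoTriangularBasis (hn : 2 ≤ n) (f : Fin n → ℝ → ℝ) (σ : Equiv.Perm (Fin n))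
    (t : Fin n → ℝ) : Prop :=
  StrictMono t ∧ t ⟨0, zero_lt_two.trans_le hn⟩ = 0 ∧
    t ⟨n - 1, Nat.sub_lt (zero_lt_two.trans_le hn) one_pos⟩ = 1 ∧
    ∀ i hi, IsPseudoTriangularStep f σ t i hi

variable {f : Fin n → ℝ → ℝ} {σ : Equiv.Perm (Fin n)} {t : Fin n → ℝ}

theorem IsPseudoTriangularStep.bijOn {i : Fin n} {hi : (i : ℕ) + 1 < n}
    (h : IsPseudoTriangularStep f σ t i hi) :
    BijOn (f (σ i)) (Icc (t i) (t ⟨(i : ℕ) + 1, hi⟩)) (Icc 0 1) :=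
  h.2.2.2.1

theorem IsPseudoTriangularStep.curve_eq {i : Fin n} {hi : (i : ℕ) + 1 < n}
    (h : IsPseudoTriangularStep f σ t i hi) {x : ℝ} (hx : x ∈ Icc (t i) (t ⟨(i : ℕ) + 1, hi⟩)) :
    curve f x = f (σ i) x • 𝐞 (σ i) + (1 - f (σ i) x) • 𝐞 (σ ⟨(i : ℕ) + 1, hi⟩) :=
  (eq_smul_single_add_smul_single_iff σ (Fin.ne_of_val_ne (by simp))).2
    ⟨rfl, h.2.2.1 x hx, fun k hki hki' => h.2.1 k hki hki' x hx⟩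

theorem IsPseudoTriangularStep.eq_of_curve_eq {i j : Fin n} {hi : (i : ℕ) + 1 < n}
    {hj : (j : ℕ) + 1 < n} (hstep : IsPseudoTriangularStep f σ t i hi)
    (hstep' : IsPseudoTriangularStep f σ t j hj) (hij : (i : ℕ) < j) {x y : ℝ}
    (hx : x ∈ Icc (t i) (t ⟨(i : ℕ) + 1, hi⟩)) (hy : y ∈ Icc (t j) (t ⟨(j : ℕ) + 1, hj⟩))
    (hxy : curve f x = curve f y) : x = y := by
  obtain ⟨⟨-, hi₀⟩, -, hi_compl, hi_bij, -⟩ := hstep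
  obtain ⟨⟨hj₁, -⟩, hj_zero, -, hj_bij, -⟩ := hstep'
  have hfxy : ∀ k, f k x = f k y := fun k => by simpa using congrArg (· k) hxy
  have hx₀ : f (σ i) x = 0 := by
    rw [hfxy, hj_zero i (Fin.ne_of_val_ne (by omega)) (Fin.ne_of_val_ne (by simp; omega)) y hy]
  have hx_eq : x = t ⟨(i : ℕ) + 1, hi⟩ :=
    hi_bij.injOn hx (right_mem_Icc.2 (hx.1.trans hx.2)) (hx₀.trans hi₀.symm)
  have hy₁ : f (σ ⟨(i : ℕ) + 1, hi⟩) y = 1 := by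
    rw [← hfxy, hi_compl x hx, hx₀, sub_zero]
  obtain hij' | hij' := (Nat.succ_le_of_lt hij).eq_or_lt
  · obtain rfl : (⟨(i : ℕ) + 1, hi⟩ : Fin n) = j := Fin.ext hij'
    rw [hx_eq, hj_bij.injOn hy (left_mem_Icc.2 (hy.1.trans hy.2)) (hy₁.trans hj₁.symm)]
  · have := hj_zero ⟨(i : ℕ) + 1, hi⟩ (Fin.ne_of_val_ne (by simp; omega))
      (Fin.ne_of_val_ne (by simp; omega)) y hy
    linarith

namespace IsPseudoTriangularBasis

variable {hn : 2 ≤ n}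

theorem step (h : IsPseudoTriangularBasis hn f σ t) (i : Fin n) (hi : (i : ℕ) + 1 < n) :
    IsPseudoTriangularStep f σ t i hi :=
  h.2.2.2 i hi

theorem Icc_subset (h : IsPseudoTriangularBasis hn f σ t) (i : Fin n) (hi : (i : ℕ) + 1 < n) :
    Icc (t i) (t ⟨(i : ℕ) + 1, hi⟩) ⊆ Icc 0 1 := by
  rw [← h.2.1, ← h.2.2.1]
  exact Icc_subset_Icc (h.1.monotone (by simp [Fin.le_def])) (h.1.monotone (by simp; omega))

theorem exists_mem_Icc (h : IsPseudoTriangularBasis hn f σ t) {x : ℝ} (hx : x ∈ Icc (0 : ℝ) 1) :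
    ∃ (i : Fin n) (hi : (i : ℕ) + 1 < n), x ∈ Icc (t i) (t ⟨(i : ℕ) + 1, hi⟩) :=
  exists_mem_Icc_of_monotone hn h.1.monotone (by rwa [h.2.1, h.2.2.1])

theorem injOn_curve (h : IsPseudoTriangularBasis hn f σ t) : InjOn (curve f) (Icc 0 1) := by
  intro x hx y hy hxy
  obtain ⟨i, hi, hxi⟩ := h.exists_mem_Icc hx
  obtain ⟨j, hj, hyj⟩ := h.exists_mem_Icc hy
  rcases lt_trichotomy (i : ℕ) j with hij | hij | hij
  · exact (h.step i hi).eq_of_curve_eq (h.step j hj) hij hxi hyj hxy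
  · obtain rfl : i = j := Fin.ext hij
    exact (h.step i hi).bijOn.injOn hxi hyj (by simpa using congrArg (· (σ i)) hxy)
  · exact ((h.step j hj).eq_of_curve_eq (h.step i hi) hij hyj hxi hxy.symm).symm

theorem image_curve (h : IsPseudoTriangularBasis hn f σ t) :
    curve f '' Icc 0 1 = hamPath σ := by
  apply Subset.antisymm
  · rintro _ ⟨x, hx, rfl⟩
    obtain ⟨i, hi, hxi⟩ := h.exists_mem_Icc hx
    exact mem_hamPath_iff.2 ⟨i, hi, f (σ i) x, (h.step i hi).bijOn.mapsTo hxi,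
      (h.step i hi).curve_eq hxi⟩
  · intro p hp
    obtain ⟨i, hi, a, ha, rfl⟩ := mem_hamPath_iff.1 hp
    obtain ⟨x, hxi, rfl⟩ := (h.step i hi).bijOn.surjOn ha
    exact ⟨x, h.Icc_subset i hi hxi, (h.step i hi).curve_eq hxi⟩

end IsPseudoTriangularBasis

theorem isPseudoTriangularStep_of_strictMonoOn {π : Equiv.Perm (Fin n)}
    (hcont : ∀ i, ContinuousOn (f i) (Icc 0 1)) (him : curve f '' Icc 0 1 = hamPath π)
    (hmono : StrictMonoOn (pathParam π ∘ curve f) (Icc 0 1)) (ht : ∀ k, t k ∈ Icc (0 : ℝ) 1)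
    (hval : ∀ k, pathParam π (curve f (t k)) = k) {i : Fin n} (hi : (i : ℕ) + 1 < n)
    (hlt : t i < t ⟨(i : ℕ) + 1, hi⟩) : IsPseudoTriangularStep f π t i hi := by
  set i' : Fin n := ⟨(i : ℕ) + 1, hi⟩
  have hI : Icc (t i) (t i') ⊆ Icc 0 1 := Icc_subset_Icc (ht i).1 (ht i').2
  have hval' : pathParam π (curve f (t i')) = i + 1 := by rw [hval]; simp [i']
  have hparam : ∀ x ∈ Icc (t i) (t i'), pathParam π (curve f x) ∈ Icc (i : ℝ) (i + 1) :=
    fun x hx => ⟨hval i ▸ hmono.monotoneOn (ht i) (hI hx) hx.1,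
      hval' ▸ hmono.monotoneOn (hI hx) (ht i') hx.2⟩
  have hcoord := fun x (hx : x ∈ Icc (t i) (t i')) =>
    (eq_smul_single_add_smul_single_iff π (Fin.ne_of_val_ne (by simp))).1
      (eq_of_mem_hamPath (him ▸ mem_image_of_mem _ (hI hx)) hi (hparam x hx).1 (hparam x hx).2)
  simp only [curve_apply] at hcoord
  have hparam_lt : ∀ x ∈ Icc (t i) (t i'), ∀ y ∈ Icc (t i) (t i'), x < y →
      pathParam π (curve f x) < pathParam π (curve f y) :=
    fun x hx y hy hxy => hmono (hI hx) (hI hy) hxy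
  have hleft : t i ∈ Icc (t i) (t i') := left_mem_Icc.2 hlt.le
  have hright : t i' ∈ Icc (t i) (t i') := right_mem_Icc.2 hlt.le
  have hanti : StrictAntiOn (f (π i)) (Icc (t i) (t i')) := fun x hx y hy hxy => by
    rw [(hcoord x hx).1, (hcoord y hy).1]
    linarith [hparam_lt x hx y hy hxy]
  have hmono' : StrictMonoOn (f (π i')) (Icc (t i) (t i')) := fun x hx y hy hxy => by
    rw [(hcoord x hx).2.1, (hcoord y hy).2.1]
    linarith [hparam_lt x hx y hy hxy]
  have h₁ : f (π i) (t i) = 1 := by simpa [hval] using (hcoord _ hleft).1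
  have h₀ : f (π i) (t i') = 0 := by simpa [hval'] using (hcoord _ hright).1
  refine ⟨⟨h₁, h₀⟩, fun k hk hk' x hx => (hcoord x hx).2.2 k hk hk',
    fun x hx => by rw [(hcoord x hx).2.1, (hcoord x hx).1], ?_, ?_⟩
  · simpa [h₁, h₀] using hanti.bijOn_Icc hlt.le ((hcont _).mono hI)
  · have h₀' : f (π i') (t i) = 0 := by simpa [hval] using (hcoord _ hleft).2.1
    have h₁' : f (π i') (t i') = 1 := by simpa [hval'] using (hcoord _ hright).2.1
    simpa [h₁', h₀'] using hmono'.bijOn_Icc hlt.le ((hcont _).mono hI)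

theorem isPseudoTriangularBasis_of_strictMonoOn (hn : 2 ≤ n) {π : Equiv.Perm (Fin n)}
    (hcont : ∀ i, ContinuousOn (f i) (Icc 0 1)) (him : curve f '' Icc 0 1 = hamPath π)
    (hmono : StrictMonoOn (pathParam π ∘ curve f) (Icc 0 1)) :
    ∃ t, IsPseudoTriangularBasis hn f π t := by
  have hvertex : ∀ k, ∃ x ∈ Icc (0 : ℝ) 1, curve f x = 𝐞 (π k) := fun k => by
    rw [← mem_image, him]; exact single_mem_hamPath hn π k
  choose t ht hvt using hvertex
  have hval : ∀ k, pathParam π (curve f (t k)) = k := fun k => by rw [hvt, pathParam_single]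
  have htmono : StrictMono t := fun i j hij =>
    (hmono.lt_iff_lt (ht i) (ht j)).1 (by simpa [hval] using hij)
  have hparam : ∀ x ∈ Icc (0 : ℝ) 1, pathParam π (curve f x) ∈ Icc (0 : ℝ) (n - 1) :=
    fun x hx => pathParam_mem_Icc (him ▸ mem_image_of_mem _ hx)
  refine ⟨t, htmono, le_antisymm ?_ (ht _).1, le_antisymm (ht _).2 ?_,
    fun i hi => isPseudoTriangularStep_of_strictMonoOn hcont him hmono ht hval hi
      (htmono (by simp [Fin.lt_def]))⟩
  · refine (hmono.le_iff_le (ht _) (left_mem_Icc.2 zero_le_one)).1 ?_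
    simpa [hval] using (hparam 0 (left_mem_Icc.2 zero_le_one)).1
  · refine (hmono.le_iff_le (right_mem_Icc.2 zero_le_one) (ht _)).1 ?_
    simpa [hval, Nat.cast_sub (by omega : 1 ≤ n)] using (hparam 1 (right_mem_Icc.2 zero_le_one)).2

theorem exists_isPseudoTriangularBasis (hn : 2 ≤ n) {π : Equiv.Perm (Fin n)}
    (hcont : ∀ i, ContinuousOn (f i) (Icc 0 1)) (hinj : InjOn (curve f) (Icc 0 1))
    (him : curve f '' Icc 0 1 = hamPath π) : ∃ σ t, IsPseudoTriangularBasis hn f σ t := by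
  have hc : ContinuousOn (pathParam π ∘ curve f) (Icc 0 1) := by
    change ContinuousOn (fun x => ∑ k : Fin n, ((k : ℕ) : ℝ) * f (π k) x) (Icc 0 1)
    fun_prop
  have hi : InjOn (pathParam π ∘ curve f) (Icc 0 1) :=
    (injOn_pathParam π).comp hinj (him ▸ mapsTo_image _ _)
  rcases hc.strictMonoOn_of_injOn_Icc' zero_le_one hi with hmono | hanti
  · exact ⟨π, isPseudoTriangularBasis_of_strictMonoOn hn hcont him hmono⟩
  · refine ⟨Fin.revPerm.trans π, isPseudoTriangularBasis_of_strictMonoOn hn hcont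
      (him.trans (hamPath_revPerm π).symm) fun x hx y hy hxy => ?_⟩
    have hsum := fun z (hz : z ∈ Icc (0 : ℝ) 1) =>
      sum_eq_one_of_mem_hamPath (him ▸ mem_image_of_mem (curve f) hz)
    have := hanti hx hy hxy
    simp only [Function.comp_apply, pathParam_revPerm π (hsum x hx),
      pathParam_revPerm π (hsum y hy)] at this ⊢
    linarith

end PseudoTriangular

/-- Theorem I, (i) ⇔ (iii): `P = {f_1,…,f_n}` is a pseudo-triangular basis iff
`T_P : [0,1] → [0,1]^n` is injective and its range is a Hamiltonian path
`⋃_{i=1}^{n−1} conv{e_{π(i)}, e_{π(i+1)}}` on the 1-skeleton of `Δ_n`. -/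
theorem stmt12 (n : ℕ) (hn : 2 ≤ n) (f : Fin n → ℝ → ℝ)
    (hcont : ∀ i, ContinuousOn (f i) (Set.Icc 0 1)) :
    (∃ σ : Equiv.Perm (Fin n), ∃ t : Fin n → ℝ,
      StrictMono t ∧ t ⟨0, by omega⟩ = 0 ∧ t ⟨n - 1, by omega⟩ = 1 ∧
      ∀ i : Fin n, ∀ hi : (i : ℕ) + 1 < n,
        (f (σ i) (t i) = 1 ∧ f (σ i) (t ⟨(i : ℕ) + 1, hi⟩) = 0) ∧
        (∀ j : Fin n, j ≠ i → j ≠ ⟨(i : ℕ) + 1, hi⟩ →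
          ∀ x ∈ Set.Icc (t i) (t ⟨(i : ℕ) + 1, hi⟩), f (σ j) x = 0) ∧
        (∀ x ∈ Set.Icc (t i) (t ⟨(i : ℕ) + 1, hi⟩),
          f (σ ⟨(i : ℕ) + 1, hi⟩) x = 1 - f (σ i) x) ∧
        (Set.BijOn (f (σ i)) (Set.Icc (t i) (t ⟨(i : ℕ) + 1, hi⟩)) (Set.Icc 0 1) ∧
         Set.BijOn (f (σ ⟨(i : ℕ) + 1, hi⟩))
           (Set.Icc (t i) (t ⟨(i : ℕ) + 1, hi⟩)) (Set.Icc 0 1))) ↔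
    (Set.InjOn (fun x => (WithLp.toLp 2 (fun i => f i x) : EuclideanSpace ℝ (Fin n)))
        (Set.Icc 0 1) ∧
      ∃ π : Equiv.Perm (Fin n),
        (fun x => (WithLp.toLp 2 (fun i => f i x) : EuclideanSpace ℝ (Fin n))) '' (Set.Icc 0 1) =
          ⋃ i : Fin n, ⋃ hi : (i : ℕ) + 1 < n,
            segment ℝ (EuclideanSpace.single (π i) 1)
              (EuclideanSpace.single (π ⟨(i : ℕ) + 1, hi⟩) 1)) := by
  change (∃ σ t, IsPseudoTriangularBasis hn f σ t) ↔
    InjOn (curve f) (Icc 0 1) ∧ ∃ π, curve f '' Icc 0 1 = hamPath π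
  exact ⟨fun ⟨σ, _, h⟩ => ⟨h.injOn_curve, σ, h.image_curve⟩,
    fun ⟨hinj, _, him⟩ => exists_isPseudoTriangularBasis hn hcont hinj him⟩
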